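/- Let k ≥ 1, let Q be a primitive string, and let S be a string with |S| ≥ (2k+1)|Q|. If for some rotation index j ∈ [0,|Q|) one has δ_H(S, rot^j(Q)*) ≤ k, then among the 2k+1 consecutive length-|Q| fragments S_i := S[i|Q|..(i+1)|Q|) for i = 0,…,2k, at least k+1 of them are equal to rot^j(Q); consequently the rotation rot^j(Q) is the strict majority of the multiset {S_0,…,S_{2k}}, and the index j with this property is unique. -/

import Mathlib

open List

variable {α : Type*}

/-- The fragment S[i..j) of a string (list) S. -/
def frag (S : List α) (i j : ℕ) : List α := (S.drop i).take (j - i)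

/-- Q^∞[a..b): the fragment of the infinite repetition of Q from a (incl.) to b (excl.). -/
def repPrefix [Inhabited α] (Q : List α) (a b : ℕ) : List α :=
  (List.range' a (b - a)).map (fun i => Q.getD (i % Q.length) default)

/-- Hamming distance of two strings of the same length (counted over positions of S). -/
def hamming [DecidableEq α] [Inhabited α] (S T : List α) : ℕ :=
  ((Finset.range S.length).filter
    (fun i => S.getD i default ≠ T.getD i default)).card

/-- δ_H(S, Q*): Hamming distance of S to the length-|S| prefix of Q^∞. -/
def hammingStar [DecidableEq α] [Inhabited α] (S Q : List α) : ℕ :=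
  hamming S (repPrefix Q 0 S.length)

/-- Levenshtein cost structure (formerly in Mathlib, `Mathlib.Data.List.EditDistance.Defs`). -/
structure Levenshtein.Cost (α β δ : Type*) where
  delete : α → δ
  insert : β → δ
  substitute : α → β → δ

/-- The default unit-cost Levenshtein cost (formerly in Mathlib). -/
def Levenshtein.defaultCost {α : Type*} [DecidableEq α] : Levenshtein.Cost α α ℕ where
  delete _ := 1
  insert _ := 1
  substitute a b := if a = b then 0 else 1

/-- Helper for `suffixLevenshtein` (formerly in Mathlib). -/
def Levenshtein.impl {α β δ : Type*} [Add δ] [Min δ] (C : Levenshtein.Cost α β δ)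
    (xs : List α) (y : β) (d : {r : List δ // 0 < r.length}) : {r : List δ // 0 < r.length} :=
  let ⟨ds, w⟩ := d
  xs.zip (ds.zip ds.tail) |>.foldr
    (init := ⟨[C.insert y + ds.getLast (List.length_pos_iff.mp w)], by simp⟩)
    (fun ⟨x, d₀, d₁⟩ ⟨r, w⟩ =>
      ⟨min (C.delete x + r[0]) (min (C.insert y + d₀) (C.substitute x y + d₁)) :: r, by simp⟩)

/-- Levenshtein distances of all suffixes of `xs` to `ys` (formerly in Mathlib). -/
def suffixLevenshtein {α β δ : Type*} [Add δ] [Min δ] [Zero δ] (C : Levenshtein.Cost α β δ)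
    (xs : List α) (ys : List β) : {r : List δ // 0 < r.length} :=
  ys.foldr
    (Levenshtein.impl C xs)
    (xs.foldr (init := ⟨[0], by simp⟩) (fun a ⟨r, w⟩ => ⟨(C.delete a + r[0]) :: r, by simp⟩))

/-- Levenshtein distance (formerly in Mathlib). -/
def levenshtein {α β δ : Type*} [Add δ] [Min δ] [Zero δ] (C : Levenshtein.Cost α β δ)
    (xs : List α) (ys : List β) : δ :=
  let ⟨r, w⟩ := suffixLevenshtein C xs ys
  r[0]

/-- Edit (Levenshtein) distance. -/
def editDist [DecidableEq α] (S T : List α) : ℕ :=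
  levenshtein Levenshtein.defaultCost S T

/-- A string is primitive if it is nonempty and not a proper power of a string. -/
def Primitive (Q : List α) : Prop :=
  Q ≠ [] ∧ ∀ (U : List α) (t : ℕ), 2 ≤ t → Q ≠ (List.replicate t U).flatten

/-- p is a period of S. -/
def IsPeriod [Inhabited α] (p : ℕ) (S : List α) : Prop :=
  0 < p ∧ ∀ i, i + p < S.length → S.getD i default = S.getD (i + p) default

/-- per(S): the smallest period of S. -/
noncomputable def per [Inhabited α] (S : List α) : ℕ := sInf {p | IsPeriod p S}

/-- Occ^H_k(P,T): starting positions of k-mismatch occurrences of P in T. -/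
def occH [DecidableEq α] [Inhabited α] (k : ℕ) (P T : List α) : Finset ℕ :=
  (Finset.range (T.length - P.length + 1)).filter
    (fun i => hamming P (frag T i (i + P.length)) ≤ k)

/-- Exact occurrences of B in T. -/
def occExact [DecidableEq α] (B T : List α) : Finset ℕ :=
  (Finset.range (T.length + 1)).filter (fun i => frag T i (i + B.length) = B)

/-- Occ^E_k(P,T): starting positions of k-error (edit distance) occurrences of P in T. -/
def occE [DecidableEq α] (k : ℕ) (P T : List α) : Set ℕ :=
  {i | ∃ j, i ≤ j ∧ j ≤ T.length ∧ editDist P (frag T i j) ≤ k}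

/-- δ_E^cyc(S,Q): minimum edit distance of S to any substring of Q^∞. -/
noncomputable def edCyc [DecidableEq α] [Inhabited α] (S Q : List α) : ℕ :=
  sInf {d | ∃ i j, i ≤ j ∧ d = editDist S (repPrefix Q i j)}

/-- δ_E(S,Q*): minimum edit distance of S to a prefix of Q^∞. -/
noncomputable def edStar [DecidableEq α] [Inhabited α] (S Q : List α) : ℕ :=
  sInf {d | ∃ j, d = editDist S (repPrefix Q 0 j)}

/-- Minimum edit distance of T to a substring of Q^∞ starting at position x. -/
noncomputable def edStarAt [DecidableEq α] [Inhabited α] (T Q : List α) (x : ℕ) : ℕ :=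
  sInf {d | ∃ j, x ≤ j ∧ d = editDist T (repPrefix Q x j)}

/-- Minimum edit distance of T to a substring of Q^∞ ending at a position ≡ y (mod |Q|). -/
noncomputable def edEndAt [DecidableEq α] [Inhabited α] (T Q : List α) (y : ℕ) : ℕ :=
  sInf {d | ∃ i j, i ≤ j ∧ j % Q.length = y % Q.length ∧ d = editDist T (repPrefix Q i j)}

/-- Minimum edit distance of L to a substring of Q^∞ ending at a multiple of |Q|. -/
noncomputable def edEndMul [DecidableEq α] [Inhabited α] (L Q : List α) : ℕ :=
  sInf {d | ∃ i j, i ≤ j * Q.length ∧ d = editDist L (repPrefix Q i (j * Q.length))}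

/-- The fragment S[i..j) of S is locked with respect to Q. -/
def Locked [DecidableEq α] [Inhabited α] (S Q : List α) (i j : ℕ) : Prop :=
  (∃ a : ℕ, edCyc (frag S i j) Q = editDist (frag S i j) (repPrefix Q 0 (a * Q.length))) ∨
  (j = S.length ∧ edCyc (frag S i j) Q = edStar (frag S i j) Q) ∨
  (i = 0 ∧ edCyc (frag S i j) Q = edEndMul (frag S i j) Q) ∨
  (i = 0 ∧ j = S.length)

/-- rot^j(Q): rotation moving the last j (mod |Q|) characters to the front. -/
def rotR (Q : List α) (j : ℕ) : List α := Q.rotate (Q.length - j % Q.length)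

/-- |Mis(T,Q*) ∩ [a,b)|. -/
def misCount [DecidableEq α] [Inhabited α] (T Q : List α) (a b : ℕ) : ℕ :=
  ((Finset.Ico a b).filter (fun i => i < T.length ∧
     T.getD i default ≠ Q.getD (i % Q.length) default)).card

/-- μ_j: the total weight of aligned mismatch pairs of P and T against Q^∞ at shift j·|Q|:
a pair (τ = j|Q|+π, π) with π ∈ Mis(P,Q*), τ ∈ Mis(T,Q*) has weight 2 − δ_H(P[π],T[τ]). -/
def mu [DecidableEq α] [Inhabited α] (P T Q : List α) (j : ℕ) : ℕ :=
  ∑ π ∈ Finset.range P.length,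
    if P.getD π default ≠ Q.getD (π % Q.length) default ∧
       j * Q.length + π < T.length ∧
       T.getD (j * Q.length + π) default ≠ Q.getD ((j * Q.length + π) % Q.length) default
    then (if P.getD π default = T.getD (j * Q.length + π) default then 2 else 1)
    else 0

/-!
If `δ_H(S, R*) ≤ k` for a rotation `R` of `Q`, each of the `2k+1` aligned blocks `S_i` that
differs from `R` contains a mismatch of its own, so at most `k` blocks differ from `R` and at least
`k+1` equal it. Two strict majorities among the same `2k+1` blocks share a block, so two admissible
rotations coincide. Primitivity makes `j ↦ rot^j(Q)` injective on `[0, |Q|)`: if `d` is the least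
positive shift with `Q.rotate d = Q`, then `d ∣ |Q|` and `take d Q` commutes with `drop d Q`, so
`d < |Q|` would make `Q` a proper power of `take d Q`.
-/

namespace List

theorem eq_flatten_replicate_of_append_comm {U V : List α} (h : U ++ V = V ++ U) :
    ∀ t, V.length = t * U.length → V = (replicate t U).flatten
  | 0, hV => by simpa using hV
  | t + 1, hV => by
    have hUV : U <+: V :=
      prefix_of_prefix_length_le (h ▸ prefix_append U V) (prefix_append V U)
        (by rw [hV, Nat.succ_mul]; omega)
    obtain ⟨W, rfl⟩ := hUV
    have hW : U ++ W = W ++ U := by simpa using h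
    rw [replicate_succ, flatten_cons,
      eq_flatten_replicate_of_append_comm hW t (by simp [Nat.succ_mul] at hV; omega)]

theorem rotate_one_iterate (l : List α) (m : ℕ) : (rotate · 1)^[m] l = l.rotate m := by
  induction m with
  | zero => simp
  | succ m ih => rw [Function.iterate_succ_apply', ih, rotate_rotate]

end List

open Function

theorem Primitive.length_dvd_of_rotate_eq_self {Q : List α} (hQ : Primitive Q) {m : ℕ}
    (h : Q.rotate m = Q) : Q.length ∣ m := by
  have hperiodic : ∀ {m}, Q.rotate m = Q → IsPeriodicPt (rotate · 1) m Q := fun h ↦ by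
    rwa [IsPeriodicPt, IsFixedPt, rotate_one_iterate]
  have hn := hperiodic (rotate_length Q)
  set d := minimalPeriod (rotate · 1) Q
  have hQd : Q.rotate d = Q := by rw [← rotate_one_iterate]; exact isPeriodicPt_minimalPeriod _ Q
  suffices hd : d = Q.length from hd ▸ (hperiodic h).minimalPeriod_dvd
  by_contra hne
  have hd_pos : 0 < d := hn.minimalPeriod_pos (length_pos_iff.2 hQ.1)
  obtain ⟨t, ht⟩ := hn.minimalPeriod_dvd
  have ht2 : 2 ≤ t := by
    rcases t with _ | _ | t
    · exact absurd ht (by simpa using hQ.1)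
    · exact absurd ht.symm (by simpa using hne)
    · omega
  have hdle : d ≤ Q.length := by rw [ht]; exact Nat.le_mul_of_pos_right d (by omega)
  have hcomm : take d Q ++ drop d Q = drop d Q ++ take d Q := by
    rw [take_append_drop, ← rotate_eq_drop_append_take hdle, hQd]
  have hdrop := eq_flatten_replicate_of_append_comm hcomm (t - 1) (by
    simp only [length_drop, length_take, min_eq_left hdle]
    rw [ht, Nat.sub_one_mul, Nat.mul_comm])
  refine hQ.2 (Q.take d) t ht2 ?_
  conv_lhs => rw [← take_append_drop d Q, hdrop]
  rw [← flatten_cons, ← replicate_succ, Nat.sub_add_cancel (by omega)]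

theorem length_rotR (Q : List α) (j : ℕ) : (rotR Q j).length = Q.length := length_rotate ..

theorem Primitive.injOn_rotR {Q : List α} (hQ : Primitive Q) :
    Set.InjOn (rotR Q) (Set.Iio Q.length) := by
  intro j hj j' hj' h
  simp only [Set.mem_Iio] at hj hj'
  simp only [rotR, Nat.mod_eq_of_lt hj, Nat.mod_eq_of_lt hj'] at h
  have hself : Q.rotate (Q.length - j + j') = Q := by
    rw [← rotate_rotate, h, rotate_rotate, Nat.sub_add_cancel hj'.le, rotate_length]
  have := Nat.eq_of_dvd_of_lt_two_mul (by omega) (hQ.length_dvd_of_rotate_eq_self hself) (by omega)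
  omega

open scoped Finset

theorem Finset.eq_of_card_lt_two_mul_card_filter_eq {ι β : Type*} [DecidableEq β] {s : Finset ι}
    {f : ι → β} {a b : β} (ha : #s < 2 * #{i ∈ s | f i = a}) (hb : #s < 2 * #{i ∈ s | f i = b}) :
    a = b := by
  by_contra hab
  have hdisj : Disjoint {i ∈ s | f i = a} {i ∈ s | f i = b} :=
    Finset.disjoint_filter.2 fun i _ hia hib ↦ hab (hia ▸ hib)
  have hsub : Finset.disjUnion _ _ hdisj ⊆ s := fun i hi ↦ by
    rcases Finset.mem_disjUnion.1 hi with hi | hi <;> exact (Finset.mem_filter.1 hi).1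
  have := Finset.card_disjUnion _ _ hdisj ▸ Finset.card_le_card hsub
  omega

theorem getD_repPrefix_zero [Inhabited α] (R : List α) {i b : ℕ} (hi : i < b) :
    (repPrefix R 0 b).getD i default = R.getD (i % R.length) default := by
  simp [repPrefix, hi]

theorem hammingStar_eq_card [DecidableEq α] [Inhabited α] (S R : List α) :
    hammingStar S R =
      #{i ∈ Finset.range S.length | S.getD i default ≠ R.getD (i % R.length) default} := by
  unfold hammingStar hamming
  congr 1
  exact Finset.filter_congr fun i hi ↦ by rw [getD_repPrefix_zero _ (Finset.mem_range.1 hi)]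

theorem frag_eq_of_getD_eq [Inhabited α] {S R : List α} {a : ℕ} (hlen : a + R.length ≤ S.length)
    (h : ∀ p < R.length, S.getD (a + p) default = R.getD p default) :
    frag S a (a + R.length) = R := by
  apply ext_getElem
  · simp [frag]; omega
  · intro p hp hpR
    have := h p hpR
    rw [getD_eq_getElem _ _ (by omega), getD_eq_getElem _ _ hpR] at this
    simpa [frag] using this

theorem card_filter_frag_ne_le_hammingStar [DecidableEq α] [Inhabited α] {S R : List α} {b : ℕ}
    (hb : b * R.length ≤ S.length) :
    #{i ∈ Finset.range b | frag S (i * R.length) ((i + 1) * R.length) ≠ R} ≤ hammingStar S R := by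
  rw [hammingStar_eq_card]
  set n := R.length
  -- A block differing from `R` contains a mismatch, whose position determines the block.
  refine (Finset.card_le_card fun i hi ↦ ?_).trans (Finset.card_image_le (f := (· / n)))
  obtain ⟨hib, hne⟩ := Finset.mem_filter.1 hi
  have hib : (i + 1) * n ≤ S.length := le_trans (Nat.mul_le_mul_right n (Finset.mem_range.1 hib)) hb
  obtain ⟨p, hp, hmis⟩ : ∃ p < n, S.getD (i * n + p) default ≠ R.getD p default := by
    by_contra! hall
    exact hne (by rw [Nat.succ_mul]; exact frag_eq_of_getD_eq (by rwa [← Nat.succ_mul]) hall)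
  have hn : 0 < n := by omega
  refine Finset.mem_image.2 ⟨i * n + p, Finset.mem_filter.2 ⟨Finset.mem_range.2 ?_, ?_⟩, ?_⟩
  · rw [Nat.succ_mul] at hib; omega
  · rwa [Nat.mul_add_mod_self_right, Nat.mod_eq_of_lt hp]
  · rw [Nat.mul_comm, Nat.mul_add_div hn, Nat.div_eq_of_lt hp, Nat.add_zero]

theorem le_card_filter_frag_eq [DecidableEq α] [Inhabited α] {S R : List α} {k : ℕ}
    (hS : (2 * k + 1) * R.length ≤ S.length) (h : hammingStar S R ≤ k) :
    k + 1 ≤ #{i ∈ Finset.range (2 * k + 1) | frag S (i * R.length) ((i + 1) * R.length) = R} := by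
  have hsplit := Finset.card_filter_add_card_filter_not (s := Finset.range (2 * k + 1))
    (fun i ↦ frag S (i * R.length) ((i + 1) * R.length) = R)
  have := card_filter_frag_ne_le_hammingStar hS
  simp only [Finset.card_range, ← ne_eq] at hsplit
  omega

theorem rotation_majority_general {α : Type*} [DecidableEq α] [Inhabited α]
    (S Q : List α) (k j : ℕ) (hQ : Primitive Q)
    (hS : (2 * k + 1) * Q.length ≤ S.length) (hj : j < Q.length)
    (h : hammingStar S (rotR Q j) ≤ k) :
    k + 1 ≤ ((Finset.range (2 * k + 1)).filter
        (fun i => frag S (i * Q.length) ((i + 1) * Q.length) = rotR Q j)).card ∧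
    (∀ j', j' < Q.length → hammingStar S (rotR Q j') ≤ k → j' = j) := by
  have hmaj : ∀ j', hammingStar S (rotR Q j') ≤ k → k + 1 ≤ ((Finset.range (2 * k + 1)).filter
      (fun i => frag S (i * Q.length) ((i + 1) * Q.length) = rotR Q j')).card := fun j' h' ↦ by
    simpa only [length_rotR] using le_card_filter_frag_eq (by rwa [length_rotR]) h'
  refine ⟨hmaj j h, fun j' hj' h' ↦ hQ.injOn_rotR hj' hj ?_⟩
  have hmaj_j := hmaj j h
  have hmaj_j' := hmaj j' h'
  exact Finset.eq_of_card_lt_two_mul_card_filter_eq (s := Finset.range (2 * k + 1))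
    (f := fun i ↦ frag S (i * Q.length) ((i + 1) * Q.length))
    (by rw [Finset.card_range]; omega) (by rw [Finset.card_range]; omega)

/-- a rotation of Q at Hamming distance ≤ k from S (of length ≥ (2k+1)|Q|)
is the strict majority among 2k+1 consecutive length-|Q| fragments, and is unique. -/
theorem rotation_majority {α : Type*} [DecidableEq α] [Inhabited α]
    (S Q : List α) (k j : ℕ) (hk : 1 ≤ k) (hQ : Primitive Q)
    (hS : (2 * k + 1) * Q.length ≤ S.length) (hj : j < Q.length)
    (h : hammingStar S (rotR Q j) ≤ k) :
    k + 1 ≤ ((Finset.range (2 * k + 1)).filter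
        (fun i => frag S (i * Q.length) ((i + 1) * Q.length) = rotR Q j)).card ∧
    (∀ j', j' < Q.length → hammingStar S (rotR Q j') ≤ k → j' = j) :=
  rotation_majority_general S Q k j hQ hS hj h
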